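/- Let m, n ≥ 4 and let ∘ be any of the operations union, intersection, set difference, or symmetric difference. Then κ(L'_m(a,b) ∘ L_n(b,a)) = mn - (m + n - 2), where both languages are over the alphabet {a,b} and in L_n(b,a) the roles of the letters a and b are exchanged. -/

import Mathlib

/-- Left quotient of a language by a word. -/
def leftQuot {α : Type} (L : Set (List α)) (w : List α) : Set (List α) := {x | w ++ x ∈ L}

/-- The set of left quotients of `L`. -/
def quotients {α : Type} (L : Set (List α)) : Set (Set (List α)) :=
  Set.range (leftQuot L)

/-- The state complexity of `L`: the number of distinct left quotients of `L`. -/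
noncomputable def stateComplexity {α : Type} (L : Set (List α)) : ℕ :=
  Nat.card (quotients L)

/-- The two-letter alphabet `{a,b}`. -/
inductive AB : Type
  | a | b
  deriving DecidableEq

/-- The transitions of `D'_m(a,b)` (states `{0,…,m-1}` embedded in `ℕ`):
`a : (1,…,m-1)(0→1)`, `b : (1,2)(0→2)`. -/
def stepStd (m : ℕ) (q : ℕ) : AB → ℕ
  | AB.a => if q = m - 1 then 1 else q + 1
  | AB.b => if q = 0 then 2 else if q = 1 then 2 else if q = 2 then 1 else q

/-- The DFA `D'_m(a,b)`, initial state `0`, final state `m-1`. -/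
def DmStd (m : ℕ) : DFA AB ℕ := ⟨stepStd m, 0, {m - 1}⟩

/-- The language `L'_m(a,b)`. -/
def LmStd (m : ℕ) : Set (List AB) := (DmStd m).accepts

/-- The transitions of the dialect `D_n(b,a)`: the roles of `a` and `b` are exchanged,
so `b : (1,…,n-1)(0→1)` and `a : (1,2)(0→2)`. -/
def stepSwap (n : ℕ) (q : ℕ) : AB → ℕ
  | AB.b => if q = n - 1 then 1 else q + 1
  | AB.a => if q = 0 then 2 else if q = 1 then 2 else if q = 2 then 1 else q

/-- The DFA `D_n(b,a)`, initial state `0`, final state `n-1`. -/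
def DnSwap (n : ℕ) : DFA AB ℕ := ⟨stepSwap n, 0, {n - 1}⟩

/-- The language `L_n(b,a)`. -/
def LnSwap (n : ℕ) : Set (List AB) := (DnSwap n).accepts

/- aux -/
namespace SC17

def cyc (N p : ℕ) : ℕ := if p = N then 1 else p + 1
def tog (q : ℕ) : ℕ := if q = 0 then 2 else if q = 1 then 2 else if q = 2 then 1 else q

lemma stepStd_a (m p : ℕ) : stepStd m p AB.a = cyc (m-1) p := rfl
lemma stepStd_b (m p : ℕ) : stepStd m p AB.b = tog p := rfl
lemma stepSwap_b (n q : ℕ) : stepSwap n q AB.b = cyc (n-1) q := rfl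
lemma stepSwap_a (n q : ℕ) : stepSwap n q AB.a = tog q := rfl

lemma cyc_iter {N : ℕ} (hN : 1 ≤ N) :
    ∀ k p, 1 ≤ p → p ≤ N → (cyc N)^[k] p = (p - 1 + k) % N + 1 := by
  intro k
  induction k with
  | zero =>
    intro p h1 h2
    simp only [Function.iterate_zero, id, Nat.add_zero]
    rw [Nat.mod_eq_of_lt (by omega)]
    omega
  | succ k ih =>
    intro p h1 h2
    rw [Function.iterate_succ_apply]
    by_cases hp : p = N
    · rw [show cyc N p = 1 from by simp [cyc, hp]]
      rw [ih 1 le_rfl hN]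
      have : p - 1 + (k + 1) = k + N := by omega
      rw [this, Nat.add_mod_right]
      norm_num
    · rw [show cyc N p = p + 1 from by simp [cyc, hp]]
      rw [ih (p+1) (by omega) (by omega)]
      congr 2
      omega

lemma cyc_iter_mem {N : ℕ} (hN : 1 ≤ N) {k p : ℕ} (h1 : 1 ≤ p) (h2 : p ≤ N) :
    1 ≤ (cyc N)^[k] p ∧ (cyc N)^[k] p ≤ N := by
  rw [cyc_iter hN k p h1 h2]
  have := Nat.mod_lt (p - 1 + k) (show 0 < N by omega)
  omega

lemma cyc_iter_inj {N : ℕ} (hN : 1 ≤ N) {k p p' : ℕ} (h1 : 1 ≤ p) (h2 : p ≤ N)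
    (h1' : 1 ≤ p') (h2' : p' ≤ N) (h : (cyc N)^[k] p = (cyc N)^[k] p') : p = p' := by
  rw [cyc_iter hN k p h1 h2, cyc_iter hN k p' h1' h2'] at h
  have h' : (p - 1 + k) % N = (p' - 1 + k) % N := by omega
  have := (Nat.ModEq.add_right_cancel' k h').eq_of_lt_of_lt (by omega) (by omega)
  omega

/-- `cyc^[ (t + N - c) % N ] c = t` -/
lemma cyc_iter_target {N t c : ℕ} (h1 : 1 ≤ t) (h2 : t ≤ N) (hc : 1 ≤ c) (hcN : c ≤ N) :
    (cyc N)^[(t + N - c) % N] c = t := by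
  rw [cyc_iter (by omega) _ c hc hcN]
  have e1 : (c - 1 + (t + N - c) % N) % N = (c - 1 + (t + N - c)) % N := Nat.add_mod_mod _ _ _
  have e2 : c - 1 + (t + N - c) = (t - 1) + N := by omega
  rw [e1, e2, Nat.add_mod_right, Nat.mod_eq_of_lt (by omega)]
  omega

lemma tog_iter_ge3 (k : ℕ) {q : ℕ} (h : 3 ≤ q) : tog^[k] q = q := by
  induction k with
  | zero => rfl
  | succ k ih =>
    rw [Function.iterate_succ_apply, show tog q = q from by
      simp only [tog]; rw [if_neg (by omega), if_neg (by omega), if_neg (by omega)], ih]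

lemma tog_iter_12 (k : ℕ) {q : ℕ} (h1 : 1 ≤ q) (h2 : q ≤ 2) :
    tog^[k] q = if k % 2 = 0 then q else 3 - q := by
  induction k with
  | zero => simp
  | succ k ih =>
    rw [Function.iterate_succ_apply'] at *
    rw [ih]
    rcases Nat.mod_two_eq_zero_or_one k with hk | hk
    · rw [if_pos hk, if_neg (by omega)]
      simp only [tog]
      split_ifs <;> omega
    · rw [if_neg (by omega), if_pos (by omega)]
      simp only [tog]
      split_ifs <;> omega

lemma tog_iter_mem {N : ℕ} (hN : 3 ≤ N) {k q : ℕ} (h1 : 1 ≤ q) (h2 : q ≤ N) :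
    1 ≤ tog^[k] q ∧ tog^[k] q ≤ N := by
  rcases le_or_gt 3 q with h | h
  · rw [tog_iter_ge3 k h]; omega
  · rw [tog_iter_12 k h1 (by omega)]
    split_ifs <;> omega

lemma tog_iter_inj {N : ℕ} (hN : 3 ≤ N) {k q q' : ℕ} (h1 : 1 ≤ q) (h2 : q ≤ N)
    (h1' : 1 ≤ q') (h2' : q' ≤ N) (h : tog^[k] q = tog^[k] q') : q = q' := by
  rcases le_or_gt 3 q with hq | hq <;> rcases le_or_gt 3 q' with hq' | hq'
  · rwa [tog_iter_ge3 k hq, tog_iter_ge3 k hq'] at h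
  · rw [tog_iter_ge3 k hq, tog_iter_12 k h1' (by omega)] at h
    split_ifs at h <;> omega
  · rw [tog_iter_ge3 k hq', tog_iter_12 k h1 (by omega)] at h
    split_ifs at h <;> omega
  · rw [tog_iter_12 k h1 (by omega), tog_iter_12 k h1' (by omega)] at h
    split_ifs at h <;> omega

lemma tog_iter_ne_top {N : ℕ} (hN : 3 ≤ N) {k q : ℕ} (h1 : 1 ≤ q) (h2 : q ≤ N)
    (h : q ≠ N) : tog^[k] q ≠ N := by
  rcases le_or_gt 3 q with hq | hq
  · rw [tog_iter_ge3 k hq]; exact h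
  · rw [tog_iter_12 k h1 (by omega)]
    split_ifs <;> omega

lemma cyc_iter_ne_top {N : ℕ} (hN : 3 ≤ N) {y j : ℕ} (hy1 : 1 ≤ y) (hy2 : y ≤ N)
    (hj : j ≤ 2) (h : y + j ≠ N) : (cyc N)^[j] y ≠ N := by
  rw [cyc_iter (by omega) j y hy1 hy2]
  intro hc
  have hc' : (y - 1 + j) % N = N - 1 := by omega
  rcases lt_or_ge (y - 1 + j) N with hlt | hge
  · rw [Nat.mod_eq_of_lt hlt] at hc'; omega
  · have e : y - 1 + j = (y - 1 + j - N) + N := by omega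
    rw [e, Nat.add_mod_right, Nat.mod_eq_of_lt (by omega)] at hc'
    omega

lemma exists_avoid {N : ℕ} (hN : 3 ≤ N) (y y' : ℕ) :
    ∃ j, j ≤ 2 ∧ y + j ≠ N ∧ y' + j ≠ N := by
  by_cases h0 : y ≠ N ∧ y' ≠ N
  · exact ⟨0, by omega⟩
  by_cases h1 : y + 1 ≠ N ∧ y' + 1 ≠ N
  · exact ⟨1, by omega⟩
  · exact ⟨2, by omega⟩

end SC17
namespace SC17

/-- Product DFA of `DmStd m` and `DnSwap n` with acceptance set `A`. -/
def PD (m n : ℕ) (A : Set (ℕ × ℕ)) : DFA AB (ℕ × ℕ) :=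
  ⟨fun s c => (stepStd m s.1 c, stepSwap n s.2 c), (0, 0), A⟩

lemma PD_step_a (m n : ℕ) (A : Set (ℕ × ℕ)) (p q : ℕ) :
    (PD m n A).step (p, q) AB.a = (cyc (m-1) p, tog q) := rfl
lemma PD_step_b (m n : ℕ) (A : Set (ℕ × ℕ)) (p q : ℕ) :
    (PD m n A).step (p, q) AB.b = (tog p, cyc (n-1) q) := rfl

lemma PD_evalFrom (m n : ℕ) (A : Set (ℕ × ℕ)) (w : List AB) :
    ∀ p q : ℕ, (PD m n A).evalFrom (p, q) w =
      ((DmStd m).evalFrom p w, (DnSwap n).evalFrom q w) := by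
  induction w with
  | nil => intro p q; rfl
  | cons c w ih =>
    intro p q
    rw [show (PD m n A).evalFrom (p,q) (c :: w)
        = (PD m n A).evalFrom (stepStd m p c, stepSwap n q c) w from rfl,
      show (DmStd m).evalFrom p (c :: w) = (DmStd m).evalFrom (stepStd m p c) w from rfl,
      show (DnSwap n).evalFrom q (c :: w) = (DnSwap n).evalFrom (stepSwap n q c) w from rfl]
    exact ih _ _

lemma evalFrom_replicate {σ : Type*} (M : DFA AB σ) (c : AB) (k : ℕ) :
    ∀ s, M.evalFrom s (List.replicate k c) = (fun x => M.step x c)^[k] s := by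
  induction k with
  | zero => intro s; rfl
  | succ k ih =>
    intro s
    rw [List.replicate_succ, Function.iterate_succ_apply]
    exact ih (M.step s c)

lemma PD_evalFrom_repa (m n : ℕ) (A : Set (ℕ × ℕ)) (k p q : ℕ) :
    (PD m n A).evalFrom (p, q) (List.replicate k AB.a) = ((cyc (m-1))^[k] p, tog^[k] q) := by
  rw [evalFrom_replicate]
  have : (fun x : ℕ × ℕ => (PD m n A).step x AB.a) = Prod.map (cyc (m-1)) tog := rfl
  rw [this, Prod.map_iterate]
  rfl

lemma PD_evalFrom_repb (m n : ℕ) (A : Set (ℕ × ℕ)) (j p q : ℕ) :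
    (PD m n A).evalFrom (p, q) (List.replicate j AB.b) = (tog^[j] p, (cyc (n-1))^[j] q) := by
  rw [evalFrom_replicate]
  have : (fun x : ℕ × ℕ => (PD m n A).step x AB.b) = Prod.map tog (cyc (n-1)) := rfl
  rw [this, Prod.map_iterate]
  rfl

/-- The set of reachable states. -/
def S (m n : ℕ) : Set (ℕ × ℕ) :=
  insert (0, 0) (Set.Icc 1 (m-1) ×ˢ Set.Icc 1 (n-1))

lemma mem_S {m n : ℕ} {s : ℕ × ℕ} :
    s ∈ S m n ↔ s = (0,0) ∨ (1 ≤ s.1 ∧ s.1 ≤ m-1 ∧ 1 ≤ s.2 ∧ s.2 ≤ n-1) := by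
  simp only [S, Set.mem_insert_iff, Set.mem_prod, Set.mem_Icc]
  tauto

lemma S_closed {m n : ℕ} (hm : 4 ≤ m) (hn : 4 ≤ n) {s : ℕ × ℕ} (hs : s ∈ S m n)
    (A : Set (ℕ × ℕ)) (c : AB) : (PD m n A).step s c ∈ S m n := by
  obtain ⟨p, q⟩ := s
  rw [mem_S] at hs
  have hm1 : 3 ≤ m - 1 := by omega
  have hn1 : 3 ≤ n - 1 := by omega
  rcases hs with h | h
  · simp only [Prod.mk.injEq] at h
    obtain ⟨rfl, rfl⟩ := h
    cases c
    · rw [PD_step_a, mem_S]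
      right
      rw [show cyc (m-1) 0 = 1 from by simp [cyc],
        show tog 0 = 2 from rfl]
      simp only
      omega
    · rw [PD_step_b, mem_S]
      right
      rw [show tog 0 = 2 from rfl, show cyc (n-1) 0 = 1 from by simp [cyc]]
      simp only
      omega
  · simp only at h
    cases c
    · rw [PD_step_a, mem_S]
      right
      rw [show cyc (m-1) p = (cyc (m-1))^[1] p from rfl, show tog q = tog^[1] q from rfl]
      have h1 := cyc_iter_mem (show 1 ≤ m-1 by omega) (k := 1) h.1 h.2.1
      have h2 := tog_iter_mem hn1 (k := 1) h.2.2.1 h.2.2.2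
      exact ⟨h1.1, h1.2, h2.1, h2.2⟩
    · rw [PD_step_b, mem_S]
      right
      rw [show tog p = tog^[1] p from rfl, show cyc (n-1) q = (cyc (n-1))^[1] q from rfl]
      have h1 := tog_iter_mem hm1 (k := 1) h.1 h.2.1
      have h2 := cyc_iter_mem (show 1 ≤ n-1 by omega) (k := 1) h.2.2.1 h.2.2.2
      exact ⟨h1.1, h1.2, h2.1, h2.2⟩

end SC17

namespace SC17

lemma eval_b3 (m n : ℕ) (A : Set (ℕ × ℕ)) (hm : 4 ≤ m) (hn : 4 ≤ n) :
    (PD m n A).evalFrom (0, 0) (List.replicate 3 AB.b) = (2, 3) := by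
  rw [PD_evalFrom_repb]
  have h1 : tog^[3] 0 = 2 := rfl
  have h2 : (cyc (n-1))^[3] 0 = 3 := by
    rw [show (3:ℕ) = 2 + 1 from rfl, Function.iterate_succ_apply,
      show cyc (n-1) 0 = 1 from by simp [cyc],
      cyc_iter (show 1 ≤ n-1 by omega) 2 1 le_rfl (by omega),
      Nat.mod_eq_of_lt (by omega)]
  rw [h1, h2]

lemma reach {m n : ℕ} (hm : 4 ≤ m) (hn : 4 ≤ n) (A : Set (ℕ × ℕ)) {p q : ℕ}
    (hp1 : 1 ≤ p) (hp2 : p ≤ m - 1) (hq1 : 1 ≤ q) (hq2 : q ≤ n - 1) :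
    ∃ w, (PD m n A).eval w = (p, q) := by
  set j := (q + (n-1) - 3) % (n-1) with hj
  set p' := if 3 ≤ p then p else (if j % 2 = 0 then p else 3 - p) with hp'
  set k := (p' + (m-1) - 2) % (m-1) with hk
  have hp'1 : 1 ≤ p' := by rw [hp']; split_ifs <;> omega
  have hp'2 : p' ≤ m - 1 := by rw [hp']; split_ifs <;> omega
  refine ⟨List.replicate 3 AB.b ++ (List.replicate k AB.a ++ List.replicate j AB.b), ?_⟩
  show (PD m n A).evalFrom (0,0) _ = _
  rw [DFA.evalFrom_of_append, eval_b3 m n A hm hn, DFA.evalFrom_of_append,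
    PD_evalFrom_repa, cyc_iter_target hp'1 hp'2 (by omega) (by omega),
    tog_iter_ge3 k (by omega), PD_evalFrom_repb,
    cyc_iter_target hq1 hq2 (by omega) (by omega)]
  congr 1
  by_cases h3 : 3 ≤ p
  · rw [show p' = p from by rw [hp', if_pos h3], tog_iter_ge3 j h3]
  · have hple : p ≤ 2 := by omega
    have hp'12 : 1 ≤ p' ∧ p' ≤ 2 := by rw [hp']; split_ifs <;> omega
    rw [tog_iter_12 j hp'12.1 hp'12.2, hp']
    rw [if_neg h3]
    split_ifs <;> omega

def LF (m n : ℕ) (A : Set (ℕ × ℕ)) (s : ℕ × ℕ) : Set (List AB) :=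
  {x | (PD m n A).evalFrom s x ∈ A}

lemma leftQuot_eq (m n : ℕ) (A : Set (ℕ × ℕ)) (w : List AB) :
    leftQuot ((PD m n A).accepts : Set (List AB)) w = LF m n A ((PD m n A).eval w) := by
  ext x
  show w ++ x ∈ (PD m n A).accepts ↔ _
  rw [DFA.mem_accepts]
  show (PD m n A).evalFrom (PD m n A).start (w ++ x) ∈ A ↔ _
  rw [DFA.evalFrom_of_append]
  rfl

lemma range_eval (m n : ℕ) (hm : 4 ≤ m) (hn : 4 ≤ n) (A : Set (ℕ × ℕ)) :
    Set.range ((PD m n A).eval) = S m n := by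
  apply Set.eq_of_subset_of_subset
  · rintro _ ⟨w, rfl⟩
    induction w using List.reverseRecOn with
    | nil => rw [mem_S]; left; rfl
    | append_singleton w c ih =>
      rw [DFA.eval_append_singleton]
      exact S_closed hm hn ih A c
  · intro s hs
    rw [mem_S] at hs
    rcases hs with h | h
    · exact ⟨[], h.symm⟩
    · obtain ⟨p, q⟩ := s
      obtain ⟨w, hw⟩ := reach hm hn A h.1 h.2.1 h.2.2.1 h.2.2.2
      exact ⟨w, hw⟩

lemma quotients_eq (m n : ℕ) (hm : 4 ≤ m) (hn : 4 ≤ n) (A : Set (ℕ × ℕ)) :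
    quotients ((PD m n A).accepts : Set (List AB)) = LF m n A '' S m n := by
  rw [← range_eval m n hm hn A]
  ext L
  constructor
  · rintro ⟨w, rfl⟩
    exact ⟨(PD m n A).eval w, ⟨w, rfl⟩, (leftQuot_eq m n A w).symm⟩
  · rintro ⟨_, ⟨w, rfl⟩, rfl⟩
    exact ⟨w, leftQuot_eq m n A w⟩

lemma ncard_S (m n : ℕ) (hm : 4 ≤ m) (hn : 4 ≤ n) :
    (S m n).ncard = (m-1) * (n-1) + 1 := by
  have hnm : (0, 0) ∉ (Set.Icc 1 (m-1) ×ˢ Set.Icc 1 (n-1) : Set (ℕ × ℕ)) := by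
    simp [Set.mem_prod]
  rw [S, Set.ncard_insert_of_notMem hnm
    (((Set.finite_Icc _ _).prod (Set.finite_Icc _ _)))]
  rw [← Finset.coe_Icc, ← Finset.coe_Icc, ← Finset.coe_product, Set.ncard_coe_finset,
    Finset.card_product, Nat.card_Icc, Nat.card_Icc]
  norm_num

end SC17

namespace SC17

/-- Hypothesis allowing to distinguish states with distinct first components. -/
def H1 (m n : ℕ) (A : Set (ℕ × ℕ)) : Prop :=
  ((m-1, n-1) ∈ A ∧
    ∀ p z, 1 ≤ p → p ≤ m-1 → p ≠ m-1 → 1 ≤ z → z ≤ n-1 → (p, z) ∉ A) ∨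
  ((∀ z, 1 ≤ z → z ≤ n-1 → z ≠ n-1 → (m-1, z) ∈ A) ∧
    ∀ p z, 1 ≤ p → p ≤ m-1 → p ≠ m-1 → 1 ≤ z → z ≤ n-1 → z ≠ n-1 → (p, z) ∉ A)

/-- Hypothesis allowing to distinguish states with equal first components. -/
def H2 (m n : ℕ) (A : Set (ℕ × ℕ)) : Prop :=
  (∀ z, 1 ≤ z → z ≤ n-1 → z ≠ n-1 → (((m-1, n-1) ∈ A) ↔ (m-1, z) ∉ A)) ∨
  (∀ c z, 1 ≤ c → c ≤ 2 → 1 ≤ z → z ≤ n-1 → z ≠ n-1 → (((c, n-1) ∈ A) ↔ (c, z) ∉ A))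

lemma LF_ne_q (m n : ℕ) (hm : 4 ≤ m) (hn : 4 ≤ n) (A : Set (ℕ × ℕ))
    {p q q' c₀ : ℕ} (hp1 : 1 ≤ p) (hp2 : p ≤ m-1) (hq1 : 1 ≤ q) (hq2 : q ≤ n-1)
    (hq1' : 1 ≤ q') (hq2' : q' ≤ n-1) (hqq : q ≠ q')
    (hc₀1 : 1 ≤ c₀) (hc₀2 : c₀ ≤ m-1)
    (hA : ∀ jj z, 1 ≤ z → z ≤ n-1 → z ≠ n-1 →
      (((tog^[jj] c₀, n-1) ∈ A) ↔ (tog^[jj] c₀, z) ∉ A)) :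
    LF m n A (p, q) ≠ LF m n A (p, q') := by
  intro heq
  have hN2 : (3:ℕ) ≤ n - 1 := by omega
  have hN2' : (1:ℕ) ≤ n - 1 := by omega
  set k := (c₀ + (m-1) - p) % (m-1) with hk
  set jj := ((n-1) + (n-1) - tog^[k] q) % (n-1) with hjj
  set x := List.replicate k AB.a ++ List.replicate jj AB.b with hx
  have hyq := tog_iter_mem hN2 (k := k) hq1 hq2
  have hyq' := tog_iter_mem hN2 (k := k) hq1' hq2'
  have e1 : (PD m n A).evalFrom (p, q) x = (tog^[jj] c₀, n-1) := by
    rw [hx, DFA.evalFrom_of_append, PD_evalFrom_repa,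
      cyc_iter_target hc₀1 hc₀2 hp1 hp2, PD_evalFrom_repb,
      cyc_iter_target hN2' le_rfl hyq.1 hyq.2]
  have e2 : (PD m n A).evalFrom (p, q') x
      = (tog^[jj] c₀, (cyc (n-1))^[jj] (tog^[k] q')) := by
    rw [hx, DFA.evalFrom_of_append, PD_evalFrom_repa,
      cyc_iter_target hc₀1 hc₀2 hp1 hp2, PD_evalFrom_repb]
  have hz'mem := cyc_iter_mem hN2' (k := jj) hyq'.1 hyq'.2
  have hz'ne : (cyc (n-1))^[jj] (tog^[k] q') ≠ n - 1 := by
    intro hcon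
    have hcc : (cyc (n-1))^[jj] (tog^[k] q) = (cyc (n-1))^[jj] (tog^[k] q') := by
      rw [hcon, cyc_iter_target hN2' le_rfl hyq.1 hyq.2]
    have := cyc_iter_inj hN2' hyq.1 hyq.2 hyq'.1 hyq'.2 hcc
    exact hqq (tog_iter_inj hN2 hq1 hq2 hq1' hq2' this)
  have key : (PD m n A).evalFrom (p,q) x ∈ A ↔ (PD m n A).evalFrom (p,q') x ∈ A :=
    Set.ext_iff.mp heq x
  rw [e1, e2] at key
  have := hA jj _ hz'mem.1 hz'mem.2 hz'ne
  tauto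

lemma LF_ne_p (m n : ℕ) (hm : 4 ≤ m) (hn : 4 ≤ n) (A : Set (ℕ × ℕ)) (h1 : H1 m n A)
    {p q p' q' : ℕ} (hp1 : 1 ≤ p) (hp2 : p ≤ m-1) (hq1 : 1 ≤ q) (hq2 : q ≤ n-1)
    (hp1' : 1 ≤ p') (hp2' : p' ≤ m-1) (hq1' : 1 ≤ q') (hq2' : q' ≤ n-1)
    (hpp : p ≠ p') :
    LF m n A (p, q) ≠ LF m n A (p', q') := by
  intro heq
  have hN1 : (3:ℕ) ≤ m - 1 := by omega
  have hN1' : (1:ℕ) ≤ m - 1 := by omega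
  have hN2 : (3:ℕ) ≤ n - 1 := by omega
  have hN2' : (1:ℕ) ≤ n - 1 := by omega
  set k := ((m-1) + (m-1) - p) % (m-1) with hk
  have hfp : (cyc (m-1))^[k] p = m - 1 := cyc_iter_target hN1' le_rfl hp1 hp2
  have hfp'mem := cyc_iter_mem hN1' (k := k) hp1' hp2'
  have hfp'ne : (cyc (m-1))^[k] p' ≠ m - 1 := by
    intro hcon
    exact hpp (cyc_iter_inj hN1' hp1 hp2 hp1' hp2' (hfp.trans hcon.symm))
  have hy := tog_iter_mem hN2 (k := k) hq1 hq2
  have hy' := tog_iter_mem hN2 (k := k) hq1' hq2'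
  rcases h1 with ⟨hin, hout⟩ | ⟨hin, hout⟩
  · -- intersection-like
    set jj := ((n-1) + (n-1) - tog^[k] q) % (n-1) with hjj
    set x := List.replicate k AB.a ++ List.replicate jj AB.b with hx
    have e1 : (PD m n A).evalFrom (p, q) x = (m-1, n-1) := by
      rw [hx, DFA.evalFrom_of_append, PD_evalFrom_repa, hfp, PD_evalFrom_repb,
        tog_iter_ge3 jj hN1, cyc_iter_target hN2' le_rfl hy.1 hy.2]
    have e2 : (PD m n A).evalFrom (p', q') x
        = (tog^[jj] ((cyc (m-1))^[k] p'), (cyc (n-1))^[jj] (tog^[k] q')) := by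
      rw [hx, DFA.evalFrom_of_append, PD_evalFrom_repa, PD_evalFrom_repb]
    have hfmem := tog_iter_mem hN1 (k := jj) hfp'mem.1 hfp'mem.2
    have hfne := tog_iter_ne_top hN1 (k := jj) hfp'mem.1 hfp'mem.2 hfp'ne
    have hsmem := cyc_iter_mem hN2' (k := jj) hy'.1 hy'.2
    have key : (PD m n A).evalFrom (p,q) x ∈ A ↔ (PD m n A).evalFrom (p',q') x ∈ A :=
      Set.ext_iff.mp heq x
    rw [e1, e2] at key
    exact hout _ _ hfmem.1 hfmem.2 hfne hsmem.1 hsmem.2 (key.mp hin)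
  · -- union-like
    obtain ⟨jj, hjj2, hav1, hav2⟩ := exists_avoid hN2 (tog^[k] q) (tog^[k] q')
    set x := List.replicate k AB.a ++ List.replicate jj AB.b with hx
    have e1 : (PD m n A).evalFrom (p, q) x
        = (m-1, (cyc (n-1))^[jj] (tog^[k] q)) := by
      rw [hx, DFA.evalFrom_of_append, PD_evalFrom_repa, hfp, PD_evalFrom_repb,
        tog_iter_ge3 jj hN1]
    have e2 : (PD m n A).evalFrom (p', q') x
        = (tog^[jj] ((cyc (m-1))^[k] p'), (cyc (n-1))^[jj] (tog^[k] q')) := by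
      rw [hx, DFA.evalFrom_of_append, PD_evalFrom_repa, PD_evalFrom_repb]
    have hzmem := cyc_iter_mem hN2' (k := jj) hy.1 hy.2
    have hzne := cyc_iter_ne_top hN2 hy.1 hy.2 hjj2 hav1
    have hz'mem := cyc_iter_mem hN2' (k := jj) hy'.1 hy'.2
    have hz'ne := cyc_iter_ne_top hN2 hy'.1 hy'.2 hjj2 hav2
    have hfmem := tog_iter_mem hN1 (k := jj) hfp'mem.1 hfp'mem.2
    have hfne := tog_iter_ne_top hN1 (k := jj) hfp'mem.1 hfp'mem.2 hfp'ne
    have key : (PD m n A).evalFrom (p,q) x ∈ A ↔ (PD m n A).evalFrom (p',q') x ∈ A :=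
      Set.ext_iff.mp heq x
    rw [e1, e2] at key
    exact hout _ _ hfmem.1 hfmem.2 hfne hz'mem.1 hz'mem.2 hz'ne
      (key.mp (hin _ hzmem.1 hzmem.2 hzne))

lemma LF_ne_core (m n : ℕ) (hm : 4 ≤ m) (hn : 4 ≤ n) (A : Set (ℕ × ℕ))
    (h1 : H1 m n A) (h2 : H2 m n A)
    {p q p' q' : ℕ} (hp1 : 1 ≤ p) (hp2 : p ≤ m-1) (hq1 : 1 ≤ q) (hq2 : q ≤ n-1)
    (hp1' : 1 ≤ p') (hp2' : p' ≤ m-1) (hq1' : 1 ≤ q') (hq2' : q' ≤ n-1)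
    (hne : (p, q) ≠ (p', q')) :
    LF m n A (p, q) ≠ LF m n A (p', q') := by
  by_cases hpp : p = p'
  · subst hpp
    have hqq : q ≠ q' := by
      intro h; exact hne (by rw [h])
    rcases h2 with h | h
    · refine LF_ne_q m n hm hn A hp1 hp2 hq1 hq2 hq1' hq2' hqq (c₀ := m-1)
        (by omega) le_rfl ?_
      intro jj z hz1 hz2 hzne
      rw [tog_iter_ge3 jj (show 3 ≤ m-1 by omega)]
      exact h z hz1 hz2 hzne
    · refine LF_ne_q m n hm hn A hp1 hp2 hq1 hq2 hq1' hq2' hqq (c₀ := 1)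
        le_rfl (by omega) ?_
      intro jj z hz1 hz2 hzne
      have hcf : 1 ≤ tog^[jj] 1 ∧ tog^[jj] 1 ≤ 2 := by
        rw [tog_iter_12 jj le_rfl (by omega)]
        split_ifs <;> omega
      exact h _ z hcf.1 hcf.2 hz1 hz2 hzne
  · exact LF_ne_p m n hm hn A h1 hp1 hp2 hq1 hq2 hp1' hp2' hq1' hq2' hpp

lemma LF_ne_of_step (m n : ℕ) (A : Set (ℕ × ℕ)) {s t : ℕ × ℕ} (c : AB)
    (h : LF m n A ((PD m n A).step s c) ≠ LF m n A ((PD m n A).step t c)) :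
    LF m n A s ≠ LF m n A t := by
  intro he
  apply h
  ext x
  exact Set.ext_iff.mp he (c :: x)

lemma tog_ge3 {x : ℕ} (h : 3 ≤ x) : tog x = x := tog_iter_ge3 1 h

lemma LF_ne_zero (m n : ℕ) (hm : 4 ≤ m) (hn : 4 ≤ n) (A : Set (ℕ × ℕ))
    (h1 : H1 m n A) (h2 : H2 m n A)
    {p' q' : ℕ} (hp1' : 1 ≤ p') (hp2' : p' ≤ m-1) (hq1' : 1 ≤ q') (hq2' : q' ≤ n-1) :
    LF m n A (0, 0) ≠ LF m n A (p', q') := by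
  by_cases hcol : p' = m-1 ∧ q' = 1
  · apply LF_ne_of_step m n A AB.b
    rw [PD_step_b, PD_step_b, hcol.1, hcol.2,
      show tog 0 = 2 from rfl, show cyc (n-1) 0 = 1 from by simp [cyc],
      tog_ge3 (show 3 ≤ m-1 by omega),
      show cyc (n-1) 1 = 2 from by rw [cyc, if_neg (by omega)]]
    exact LF_ne_core m n hm hn A h1 h2 (by omega) (by omega) le_rfl (by omega)
      (by omega) le_rfl (by omega) (by omega)
      (by intro h; rw [Prod.mk.injEq] at h; omega)
  · apply LF_ne_of_step m n A AB.a
    rw [PD_step_a, PD_step_a, show cyc (m-1) 0 = 1 from by simp [cyc],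
      show tog 0 = 2 from rfl]
    have hc := cyc_iter_mem (show (1:ℕ) ≤ m-1 by omega) (k := 1) hp1' hp2'
    have ht := tog_iter_mem (show (3:ℕ) ≤ n-1 by omega) (k := 1) hq1' hq2'
    simp only [Function.iterate_one] at hc ht
    refine LF_ne_core m n hm hn A h1 h2 le_rfl (by omega) (by omega) (by omega)
      hc.1 hc.2 ht.1 ht.2 ?_
    intro h
    rw [Prod.mk.injEq] at h
    apply hcol
    constructor
    · have hcy := h.1.symm
      rw [cyc] at hcy
      split_ifs at hcy with hsp
      · exact hsp
      · omega
    · have hto := h.2.symm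
      rw [tog] at hto
      split_ifs at hto <;> omega

lemma LF_injOn (m n : ℕ) (hm : 4 ≤ m) (hn : 4 ≤ n) (A : Set (ℕ × ℕ))
    (h1 : H1 m n A) (h2 : H2 m n A) :
    Set.InjOn (LF m n A) (S m n) := by
  intro s hs t ht heq
  by_contra hne
  rw [mem_S] at hs ht
  rcases hs with hs0 | hs <;> rcases ht with ht0 | ht
  · exact hne (hs0.trans ht0.symm)
  · obtain ⟨pt, qt⟩ := t
    subst hs0
    exact LF_ne_zero m n hm hn A h1 h2 ht.1 ht.2.1 ht.2.2.1 ht.2.2.2 heq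
  · obtain ⟨ps, qs⟩ := s
    subst ht0
    exact LF_ne_zero m n hm hn A h1 h2 hs.1 hs.2.1 hs.2.2.1 hs.2.2.2 heq.symm
  · obtain ⟨ps, qs⟩ := s
    obtain ⟨pt, qt⟩ := t
    exact LF_ne_core m n hm hn A h1 h2 hs.1 hs.2.1 hs.2.2.1 hs.2.2.2
      ht.1 ht.2.1 ht.2.2.1 ht.2.2.2 hne heq

lemma main (m n : ℕ) (hm : 4 ≤ m) (hn : 4 ≤ n) (A : Set (ℕ × ℕ))
    (h1 : H1 m n A) (h2 : H2 m n A) :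
    stateComplexity ((PD m n A).accepts : Set (List AB)) = m * n - (m + n - 2) := by
  unfold stateComplexity
  rw [quotients_eq m n hm hn A, Nat.card_coe_set_eq,
    Set.ncard_image_of_injOn (LF_injOn m n hm hn A h1 h2), ncard_S m n hm hn]
  obtain ⟨a, rfl⟩ : ∃ a, m = a + 4 := ⟨m - 4, by omega⟩
  obtain ⟨b, rfl⟩ : ∃ b, n = b + 4 := ⟨n - 4, by omega⟩
  have h3 : a + 4 - 1 = a + 3 := rfl
  have h4 : b + 4 - 1 = b + 3 := rfl
  rw [h3, h4]
  have e1 : (a+3) * (b+3) = a*b + 3*a + 3*b + 9 := by ring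
  have e2 : (a+4) * (b+4) = a*b + 4*a + 4*b + 16 := by ring
  rw [e1, e2]
  generalize a * b = c
  omega

end SC17

namespace SC17

lemma PD_eval (m n : ℕ) (A : Set (ℕ × ℕ)) (x : List AB) :
    (PD m n A).eval x = ((DmStd m).eval x, (DnSwap n).eval x) :=
  PD_evalFrom m n A x 0 0

lemma mem_LmStd (m : ℕ) (x : List AB) : x ∈ LmStd m ↔ (DmStd m).eval x = m - 1 := by
  rw [LmStd]
  rfl

lemma mem_LnSwap (n : ℕ) (x : List AB) : x ∈ LnSwap n ↔ (DnSwap n).eval x = n - 1 := by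
  rw [LnSwap]
  rfl

lemma mem_PD (m n : ℕ) (A : Set (ℕ × ℕ)) (x : List AB) :
    x ∈ ((PD m n A).accepts : Set (List AB)) ↔
      ((DmStd m).eval x, (DnSwap n).eval x) ∈ A := by
  rw [DFA.mem_accepts, PD_eval]
  rfl

lemma union_eq (m n : ℕ) :
    (LmStd m ∪ LnSwap n : Set (List AB)) =
      ((PD m n {s | s.1 = m-1 ∨ s.2 = n-1}).accepts : Set (List AB)) := by
  ext x
  rw [Set.mem_union, mem_LmStd, mem_LnSwap]
  refine Iff.trans ?_ (mem_PD m n _ x).symm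
  rfl

lemma inter_eq (m n : ℕ) :
    (LmStd m ∩ LnSwap n : Set (List AB)) =
      ((PD m n {s | s.1 = m-1 ∧ s.2 = n-1}).accepts : Set (List AB)) := by
  ext x
  rw [Set.mem_inter_iff, mem_LmStd, mem_LnSwap]
  refine Iff.trans ?_ (mem_PD m n _ x).symm
  rfl

lemma diff_eq (m n : ℕ) :
    (LmStd m \ LnSwap n : Set (List AB)) =
      ((PD m n {s | s.1 = m-1 ∧ ¬(s.2 = n-1)}).accepts : Set (List AB)) := by
  ext x
  rw [Set.mem_diff, mem_LmStd, mem_LnSwap]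
  refine Iff.trans ?_ (mem_PD m n _ x).symm
  rfl

lemma symm_eq (m n : ℕ) :
    (symmDiff (LmStd m) (LnSwap n) : Set (List AB)) =
      ((PD m n {s | (s.1 = m-1 ∧ ¬(s.2 = n-1)) ∨ (s.2 = n-1 ∧ ¬(s.1 = m-1))}).accepts
        : Set (List AB)) := by
  ext x
  rw [Set.mem_symmDiff, mem_LmStd, mem_LnSwap]
  refine Iff.trans ?_ (mem_PD m n _ x).symm
  rfl

end SC17


/-- Each of the four proper boolean operations applied to `L'_m(a,b)` and `L_n(b,a)`
yields a language of state complexity exactly `mn - (m + n - 2)`. -/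
theorem stmt17 (m n : ℕ) (hm : 4 ≤ m) (hn : 4 ≤ n) :
    stateComplexity (LmStd m ∪ LnSwap n) = m * n - (m + n - 2) ∧
    stateComplexity (LmStd m ∩ LnSwap n) = m * n - (m + n - 2) ∧
    stateComplexity (LmStd m \ LnSwap n) = m * n - (m + n - 2) ∧
    stateComplexity (symmDiff (LmStd m) (LnSwap n)) = m * n - (m + n - 2) := by
  have hm1 : 3 ≤ m - 1 := by omega
  have hn1 : 3 ≤ n - 1 := by omega
  refine ⟨?_, ?_, ?_, ?_⟩
  · rw [SC17.union_eq m n]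
    apply SC17.main m n hm hn _ ?_ ?_
    · right
      constructor
      · intro z hz1 hz2 hz3
        exact Or.inl rfl
      · intro p z a1 a2 a3 a4 a5 a6 hmem
        rcases hmem with h | h
        · exact a3 h
        · exact a6 h
    · right
      intro c z hc1 hc2 hz1 hz2 hzne
      constructor
      · intro _ hmem
        rcases hmem with h | h
        · exact absurd h (by omega)
        · exact hzne h
      · intro _
        exact Or.inr rfl
  · rw [SC17.inter_eq m n]
    apply SC17.main m n hm hn _ ?_ ?_
    · left
      constructor
      · exact ⟨rfl, rfl⟩
      · intro p z a1 a2 a3 a4 a5 hmem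
        exact a3 hmem.1
    · left
      intro z hz1 hz2 hzne
      constructor
      · intro _ hmem
        exact hzne hmem.2
      · intro _
        exact ⟨rfl, rfl⟩
  · rw [SC17.diff_eq m n]
    apply SC17.main m n hm hn _ ?_ ?_
    · right
      constructor
      · intro z hz1 hz2 hz3
        exact ⟨rfl, hz3⟩
      · intro p z a1 a2 a3 a4 a5 a6 hmem
        exact a3 hmem.1
    · left
      intro z hz1 hz2 hzne
      constructor
      · intro hmem
        exact absurd rfl hmem.2
      · intro hmem
        exact absurd ⟨rfl, hzne⟩ hmem
  · rw [SC17.symm_eq m n]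
    apply SC17.main m n hm hn _ ?_ ?_
    · right
      constructor
      · intro z hz1 hz2 hz3
        exact Or.inl ⟨rfl, hz3⟩
      · intro p z a1 a2 a3 a4 a5 a6 hmem
        rcases hmem with h | h
        · exact a3 h.1
        · exact a6 h.1
    · left
      intro z hz1 hz2 hzne
      constructor
      · intro hmem
        rcases hmem with h | h
        · exact absurd rfl h.2
        · exact absurd rfl h.2
      · intro hmem
        exact absurd (Or.inl ⟨rfl, hzne⟩) hmem
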